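/- arXiv:1611.08485 — 3 statements merged into one kernel-verified Lean document; each statement's English description precedes it below -/
import Mathlib

section
/- Let X = ℂPⁿ = GL(n+1,ℂ)/P, where P is the parabolic subgroup of matrices whose first column is (λ,0,…,0)ᵗ with λ ∈ ℂ*. Let p : ℂ^{n+1}∖{0} → ℂPⁿ be the canonical projection and v_i = p_*(z_i ∂/∂z_i) for i = 0,1,…,n. Then the standard Poisson structure on X = ℂPⁿ, defined as π_st = μ(r_𝔤) where r_𝔤 = Σ_{0≤i<j≤n} e_{ij} ∧ e_{ji} is the standard r-matrix of 𝔤 = gl(n+1,ℂ) and μ : ∧²𝔤 → 𝔛²(X) is induced by the G-action, can be written as π_st = Σ_{1≤i<j≤n} v_i ∧ v_j. -/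
/-!
Formalization of statements from "Poisson Cohomology of holomorphic toric Poisson
manifolds. I." (W. Hong).

Modeling conventions.  Mathlib has no holomorphic geometry of ℂPⁿ, so we use the
standard faithful algebraic model: a holomorphic multivector field on a toric variety
is determined by its restriction to the dense open torus, where (in the invariant
frame and with Laurent-monomial coefficients) multivector fields form the algebra
`MV n = AddMonoidAlgebra (ExteriorAlgebra ℂ ℂⁿ) ℤⁿ`: the element `single I ω`
represents `χ^I ⊗ ω` (`χ^I` the Laurent monomial of weight `I`, `ω` a constant
multivector in the frame `v_1, …, v_n`, `v_i = ρ(e_i)`).  Multiplication is the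
wedge product.  Similarly `AMV n` models multivector fields on ℂ^{n+1}∖{0} in the
frame `u_i = z_i ∂/∂z_i`.  Holomorphic multivector fields on ℂPⁿ are defined as the
image under `p_*` of the k-vector fields on ℂ^{n+1} with homogeneous polynomial
coefficients of degree k (this is exactly the classical description of
`H⁰(ℂPⁿ, ∧ᵏ𝒯)`, due to Bondal).  The Schouten differential `d_π = [π,·]` of a
torus-invariant bivector `π = ρ(Π)` acts weightwise by
`[π, χ^I ⊗ ω] = χ^I ⊗ (ι(ι_I Π) ∧ ω)`.
-/

noncomputable section
open Finset

namespace CPn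

variable (n : ℕ)

/-- Laurent multivector fields on the open torus (ℂ*)ⁿ ⊆ ℂPⁿ, in the invariant frame. -/
abbrev MV := AddMonoidAlgebra (ExteriorAlgebra ℂ (Fin n → ℂ)) (Fin n → ℤ)

/-- Ambient model: multivector fields on ℂ^{n+1}∖{0} with Laurent-monomial
coefficients, in the frame u_i = z_i ∂/∂z_i. -/
abbrev AMV := AddMonoidAlgebra (ExteriorAlgebra ℂ (Fin (n+1) → ℂ)) (Fin (n+1) → ℤ)

/-- The Laurent monomial χ^I as a multivector field (of degree 0). -/
def χ (I : Fin n → ℤ) : MV n := AddMonoidAlgebra.single I 1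

/-- The vectors e_0 = −(e_1+⋯+e_n), e_1, …, e_n in N_ℂ = ℂⁿ. -/
def EE : Fin (n+1) → (Fin n → ℂ) :=
  Fin.cases (fun _ => -1) (fun j => Pi.single j 1)

/-- The holomorphic vector fields v_i = ρ(e_i) = p_*(z_i ∂/∂z_i), 0 ≤ i ≤ n. -/
def v (i : Fin (n+1)) : MV n :=
  AddMonoidAlgebra.single 0 (ExteriorAlgebra.ι ℂ (EE n i))

/-- W = span_ℂ{v_1,…,v_n} = ρ(N_ℂ). -/
def W : Submodule ℂ (MV n) :=
  Submodule.span ℂ {x | ∃ i : Fin (n+1), i ≠ 0 ∧ x = v n i}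

/-- Extension of a weight I ∈ M ≅ ℤⁿ to (m_0, m_1, …, m_n), m_0 = −Σᵢ m_i, m_i = ⟨I,e_i⟩. -/
def mext (I : Fin n → ℤ) : Fin (n+1) → ℤ :=
  Fin.cases (-(∑ j, I j)) I

/-- The set of indices 0 ≤ i ≤ n with m_i = −1. -/
def deg1Set (I : Fin n → ℤ) : Finset (Fin (n+1)) :=
  univ.filter fun i => mext n I i = -1

/-- |I| = number of entries of (m_0,…,m_n) equal to −1. -/
def wt (I : Fin n → ℤ) : ℕ := (deg1Set n I).card

/-- 𝒱_I = v_{i_1} ∧ ⋯ ∧ v_{i_l}, where m_{i_1},…,m_{i_l} are the entries equal to −1. -/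
def VI (I : Fin n → ℤ) : MV n :=
  (((deg1Set n I).sort (· ≤ ·)).map (v n)).prod

/-- χ^I · 𝒱_I. -/
def chiVI (I : Fin n → ℤ) : MV n := χ n I * VI n I

/-- ℰ_I = e_{i_1} ∧ ⋯ ∧ e_{i_l} ∈ ∧^l N_ℂ (inside the exterior algebra of N_ℂ). -/
def EI (I : Fin n → ℤ) : ExteriorAlgebra ℂ (Fin n → ℂ) :=
  (((deg1Set n I).sort (· ≤ ·)).map fun i => ExteriorAlgebra.ι ℂ (EE n i)).prod

/-- V_I^k = ℂ(χ^I·𝒱_I) ∧ W^{k−|I|}. -/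
def VIk (I : Fin n → ℤ) (k : ℕ) : Submodule ℂ (MV n) :=
  Submodule.span ℂ {chiVI n I} * (W n) ^ (k - wt n I)

/-- u_i = z_i ∂/∂z_i on ℂ^{n+1}. -/
def uu (i : Fin (n+1)) : AMV n :=
  AddMonoidAlgebra.single 0 (ExteriorAlgebra.ι ℂ (Pi.single i 1))

/-- The Euler vector field e⃗ = Σ_i z_i ∂/∂z_i. -/
def eulerA : AMV n := ∑ i, uu n i

/-- The derivative of p : ℂ^{n+1}∖{0} → ℂPⁿ on the invariant frame:
the frame vector of u_i is sent to e_i (so e_0 = −Σ e_j); in coordinates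
w ↦ (w_j − w_0)_{1≤j≤n}. -/
def q : (Fin (n+1) → ℂ) →ₗ[ℂ] (Fin n → ℂ) :=
  LinearMap.pi fun j =>
    (LinearMap.proj j.succ : (Fin (n+1) → ℂ) →ₗ[ℂ] ℂ) -
      (LinearMap.proj (0 : Fin (n+1)) : (Fin (n+1) → ℂ) →ₗ[ℂ] ℂ)

/-- Pushforward p_* along p : ℂ^{n+1}∖{0} → ℂPⁿ (on torus-invariant fields, i.e.
those of weight a with Σ a = 0, this is the honest pushforward; the weight a
corresponds to the monomial of weight (a_1,…,a_n) in the coordinates t_j = z_j/z_0). -/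
def pstar : AMV n →ₗ[ℂ] MV n :=
  (Finsupp.lsum ℂ fun (a : Fin (n+1) → ℤ) =>
    (AddMonoidAlgebra.lsingle (fun j : Fin n => a j.succ) :
        ExteriorAlgebra ℂ (Fin n → ℂ) →ₗ[ℂ] MV n) ∘ₗ
      (ExteriorAlgebra.map (q n)).toLinearMap) ∘ₗ
    (AddMonoidAlgebra.coeffLinearEquiv ℂ).toLinearMap

/-- u_{i_1} ∧ ⋯ ∧ u_{i_k} for T = {i_1 < ⋯ < i_k} (constant-coefficient part). -/
def wedgeT (T : Finset (Fin (n+1))) : ExteriorAlgebra ℂ (Fin (n+1) → ℂ) :=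
  ((T.sort (· ≤ ·)).map fun i => ExteriorAlgebra.ι ℂ (Pi.single i 1)).prod

/-- F̃_k: the k-vector fields on ℂ^{n+1} whose coefficients in the frame
∂_{i_1}∧⋯∧∂_{i_k} are homogeneous polynomials of degree k, restricted to the torus
(z^b ∂_T = z^{b−ε_T} u_T). -/
def Ftilde (k : ℕ) : Submodule ℂ (AMV n) :=
  Submodule.span ℂ
    { x | ∃ (b : Fin (n+1) → ℕ) (T : Finset (Fin (n+1))), T.card = k ∧ (∑ i, b i) = k ∧
        x = AddMonoidAlgebra.single (fun i => (b i : ℤ) - (if i ∈ T then 1 else 0)) (wedgeT n T) }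

/-- H⁰(ℂPⁿ, ∧ᵏ𝒯) = p_*(F̃_k): holomorphic k-vector fields on ℂPⁿ. -/
def H0 (k : ℕ) : Submodule ℂ (MV n) := Submodule.map (pstar n) (Ftilde n k)

/-- ι_I Π ∈ N_ℂ for Π = Σ_{i<j} a i j · e_i∧e_j, where
ι_I (e_i∧e_j) = ⟨I,e_i⟩e_j − ⟨I,e_j⟩e_i. -/
def contr (a : Fin n → Fin n → ℂ) (I : Fin n → ℤ) : Fin n → ℂ := fun j =>
  ∑ p ∈ univ.filter (fun p : Fin n × Fin n => p.1 < p.2),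
    a p.1 p.2 * ((I p.1 : ℂ) * (if p.2 = j then 1 else 0) -
      (I p.2 : ℂ) * (if p.1 = j then 1 else 0))

/-- The toric bivector field π = Σ_{1≤i<j≤n} a i j · v_i ∧ v_j. -/
def piT (a : Fin n → Fin n → ℂ) : MV n :=
  ∑ p ∈ univ.filter (fun p : Fin n × Fin n => p.1 < p.2),
    a p.1 p.2 • (v n p.1.succ * v n p.2.succ)

/-- The Poisson differential d_π = [π, ·] (Schouten bracket with π = ρ(Π)):
on the toric frame it is given weightwise by [π, χ^I ⊗ ω] = χ^I ⊗ (ι(ι_I Π) ∧ ω). -/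
def dPi (a : Fin n → Fin n → ℂ) : MV n →ₗ[ℂ] MV n :=
  (Finsupp.lsum ℂ fun (I : Fin n → ℤ) =>
    (AddMonoidAlgebra.lsingle I : ExteriorAlgebra ℂ (Fin n → ℂ) →ₗ[ℂ] MV n) ∘ₗ
      LinearMap.mulLeft ℂ (ExteriorAlgebra.ι ℂ (contr n a I))) ∘ₗ
    (AddMonoidAlgebra.coeffLinearEquiv ℂ).toLinearMap

/-- S_k : weights I with all m_i ≥ −1 (0 ≤ i ≤ n) and |I| ≤ k. -/
def Sk (k : ℕ) : Set (Fin n → ℤ) := {I | (∀ i, -1 ≤ mext n I i) ∧ wt n I ≤ k}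

/-- S(k) : weights I with all m_i ≥ −1 (0 ≤ i ≤ n) and |I| = k. -/
def Slevel (k : ℕ) : Set (Fin n → ℤ) := {I | (∀ i, -1 ≤ mext n I i) ∧ wt n I = k}

/-- S_k(π) : I ∈ S_k satisfying (ι_I Π) ∧ ℰ_I = 0. -/
def SkPi (a : Fin n → Fin n → ℂ) (k : ℕ) : Set (Fin n → ℤ) :=
  {I | I ∈ Sk n k ∧ ExteriorAlgebra.ι ℂ (contr n a I) * EI n I = 0}

/-- S(k,π) : I with |I| = k, all m_i ≥ −1, satisfying (ι_I Π) ∧ ℰ_I = 0. -/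
def SlevelPi (a : Fin n → Fin n → ℂ) (k : ℕ) : Set (Fin n → ℤ) :=
  {I | I ∈ Slevel n k ∧ ExteriorAlgebra.ι ℂ (contr n a I) * EI n I = 0}

/-- Poisson cocycles in degree k: holomorphic k-vector fields killed by d_π. -/
def cocycles (a : Fin n → Fin n → ℂ) (k : ℕ) : Submodule ℂ (MV n) :=
  H0 n k ⊓ LinearMap.ker (dPi n a)

/-- Poisson coboundaries in degree k: d_π of the holomorphic (k−1)-vector fields. -/
def cobound (a : Fin n → Fin n → ℂ) : ℕ → Submodule ℂ (MV n)
  | 0 => ⊥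
  | (k+1) => Submodule.map (dPi n a) (H0 n k)

/-- The coefficient matrix of the standard Poisson structure π_st = Σ_{1≤i<j≤n} v_i∧v_j. -/
def aST : Fin n → Fin n → ℂ := fun _ _ => 1

/-- μ(e_{ij}) = p_*(z_j ∂/∂z_i), the fundamental vector field on ℂPⁿ of the elementary
matrix e_{ij} ∈ gl(n+1,ℂ), written upstairs on ℂ^{n+1}: z_j ∂/∂z_i = (z_j/z_i)·u_i. -/
def muE (i j : Fin (n+1)) : AMV n :=
  AddMonoidAlgebra.single (Pi.single j 1 - Pi.single i 1) (ExteriorAlgebra.ι ℂ (Pi.single i 1))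

/-!
In the frame `u_i = z_i ∂/∂z_i`, the coefficients of `μ(e_{ij}) = (z_j/z_i) u_i` and
`μ(e_{ji}) = (z_i/z_j) u_j` cancel, so `μ(e_{ij}) ∧ μ(e_{ji}) = u_i ∧ u_j`. Since `p_*` respects
the wedge product and sends `u_i` to `v_i`, this gives `π_st = Σ_{0≤i<j≤n} v_i ∧ v_j`, and the
terms with `i = 0` add up to `v_0 ∧ (v_1 + ⋯ + v_n) = -v_0 ∧ v_0 = 0`.
-/

end CPn

namespace Fin

theorem sum_filter_lt_succ {M : Type*} [AddCommMonoid M] (n : ℕ) (g : Fin (n+1) → Fin (n+1) → M) :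
    ∑ p ∈ univ.filter (fun p : Fin (n+1) × Fin (n+1) => p.1 < p.2), g p.1 p.2 =
      ∑ j : Fin n, g 0 j.succ +
        ∑ p ∈ univ.filter (fun p : Fin n × Fin n => p.1 < p.2), g p.1.succ p.2.succ := by
  simp only [sum_filter, Fintype.sum_prod_type, Fin.sum_univ_succ, if_false, zero_add,
    Fin.succ_pos, if_true, Fin.succ_lt_succ_iff, Fin.not_lt_zero]

theorem sum_filter_lt_mul_succ_of_sum_eq_zero {R : Type*} [NonUnitalNonAssocRing R] {n : ℕ}
    {f : Fin (n+1) → R} (hsum : ∑ i, f i = 0) (hsq : f 0 * f 0 = 0) :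
    ∑ p ∈ univ.filter (fun p : Fin (n+1) × Fin (n+1) => p.1 < p.2), f p.1 * f p.2 =
      ∑ p ∈ univ.filter (fun p : Fin n × Fin n => p.1 < p.2), f p.1.succ * f p.2.succ := by
  have hsucc : ∑ j : Fin n, f j.succ = -f 0 := by
    rw [Fin.sum_univ_succ] at hsum
    exact eq_neg_of_add_eq_zero_right hsum
  rw [sum_filter_lt_succ n (fun i j => f i * f j), ← mul_sum, hsucc, mul_neg, hsq, neg_zero,
    zero_add]

end Fin

namespace CPn

variable (n : ℕ)

theorem muE_mul_muE (i j : Fin (n+1)) : muE n i j * muE n j i = uu n i * uu n j := by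
  simp only [muE, uu, AddMonoidAlgebra.single_mul_single, sub_add_sub_cancel', sub_self, add_zero]

theorem pstar_single (a : Fin (n+1) → ℤ) (ω : ExteriorAlgebra ℂ (Fin (n+1) → ℂ)) :
    pstar n (AddMonoidAlgebra.single a ω) =
      AddMonoidAlgebra.single (fun j : Fin n => a j.succ) (ExteriorAlgebra.map (q n) ω) := by
  simp [pstar]

theorem pstar_mul (x y : AMV n) : pstar n (x * y) = pstar n x * pstar n y := by
  induction x using AddMonoidAlgebra.induction_linear with
  | zero => simp
  | add x x' hx hx' => simp only [add_mul, map_add, hx, hx']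
  | single a ω =>
    induction y using AddMonoidAlgebra.induction_linear with
    | zero => simp
    | add y y' hy hy' => simp only [mul_add, map_add, hy, hy']
    | single b η =>
      simp only [AddMonoidAlgebra.single_mul_single, pstar_single, map_mul]
      rfl

theorem q_single_one (i : Fin (n+1)) : q n (Pi.single i 1) = EE n i := by
  funext k
  induction i using Fin.cases with
  | zero => simp [q, EE, Fin.succ_ne_zero]
  | succ j => simp [q, EE, Pi.single_apply, (Fin.succ_ne_zero j).symm]

theorem pstar_uu (i : Fin (n+1)) : pstar n (uu n i) = v n i := by
  rw [uu, pstar_single, ExteriorAlgebra.map_apply_ι, q_single_one]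
  rfl

theorem sum_EE_eq_zero : ∑ i, EE n i = 0 := by
  funext k
  simp [EE, Fin.sum_univ_succ, Finset.sum_apply, Pi.single_apply]

theorem sum_v_eq_zero : ∑ i, v n i = 0 :=
  calc ∑ i, v n i = AddMonoidAlgebra.singleAddHom 0 (ExteriorAlgebra.ι ℂ (∑ i, EE n i)) := by
        rw [map_sum, map_sum]; rfl
    _ = 0 := by rw [sum_EE_eq_zero, map_zero, map_zero]

theorem v_mul_self (i : Fin (n+1)) : v n i * v n i = 0 := by
  rw [v, AddMonoidAlgebra.single_mul_single, ExteriorAlgebra.ι_sq_zero,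
    AddMonoidAlgebra.single_zero]

/-- The standard Poisson structure
π_st = μ(r_𝔤) = Σ_{0≤i<j≤n} μ(e_{ij}) ∧ μ(e_{ji}) on ℂPⁿ = GL(n+1,ℂ)/P, obtained from
the standard r-matrix r_𝔤 = Σ_{0≤i<j≤n} e_{ij} ∧ e_{ji} of gl(n+1,ℂ), can be written
as π_st = Σ_{1≤i<j≤n} v_i ∧ v_j, where v_i = p_*(z_i ∂/∂z_i). -/
theorem standard_poisson_structure_on_CPn (n : ℕ) :
    pstar n (∑ p ∈ univ.filter (fun p : Fin (n+1) × Fin (n+1) => p.1 < p.2),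
        muE n p.1 p.2 * muE n p.2 p.1) =
      piT n (fun _ _ => 1) := by
  simp only [muE_mul_muE, map_sum, pstar_mul, pstar_uu]
  rw [Fin.sum_filter_lt_mul_succ_of_sum_eq_zero (sum_v_eq_zero n) (v_mul_self n 0), piT]
  simp only [one_smul]

end CPn
end
end

section
/- Let π be a holomorphic toric Poisson structure on X = ℂPⁿ and d_π = [π,·]. Then d_π(V_I^k) ⊆ V_I^{k+1} for all I ∈ S_k (0 ≤ k ≤ n), where V_I^k = ℂ(χ^I·𝒱_I)∧W^{k−|I|} is viewed as a subspace of H^0(X, ∧^k T_X) and V_I^{k+1} as a subspace of H^0(X, ∧^{k+1} T_X). -/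
/-!
Formalization of statements from "Poisson Cohomology of holomorphic toric Poisson
manifolds. I." (W. Hong).

Modeling conventions.  Mathlib has no holomorphic geometry of ℂPⁿ, so we use the
standard faithful algebraic model: a holomorphic multivector field on a toric variety
is determined by its restriction to the dense open torus, where (in the invariant
frame and with Laurent-monomial coefficients) multivector fields form the algebra
`MV n = AddMonoidAlgebra (ExteriorAlgebra ℂ ℂⁿ) ℤⁿ`: the element `single I ω`
represents `χ^I ⊗ ω` (`χ^I` the Laurent monomial of weight `I`, `ω` a constant
multivector in the frame `v_1, …, v_n`, `v_i = ρ(e_i)`).  Multiplication is the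
wedge product.  Similarly `AMV n` models multivector fields on ℂ^{n+1}∖{0} in the
frame `u_i = z_i ∂/∂z_i`.  Holomorphic multivector fields on ℂPⁿ are defined as the
image under `p_*` of the k-vector fields on ℂ^{n+1} with homogeneous polynomial
coefficients of degree k (this is exactly the classical description of
`H⁰(ℂPⁿ, ∧ᵏ𝒯)`, due to Bondal).  The Schouten differential `d_π = [π,·]` of a
torus-invariant bivector `π = ρ(Π)` acts weightwise by
`[π, χ^I ⊗ ω] = χ^I ⊗ (ι(ι_I Π) ∧ ω)`.
-/

noncomputable section
open Finset

theorem mul_list_prod_of_forall_anticomm {A : Type*} [Ring A] {w : A} {L : List A}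
    (h : ∀ x ∈ L, w * x = -(x * w)) :
    w * L.prod = (-1 : ℤ) ^ L.length • (L.prod * w) := by
  induction L with
  | nil => simp
  | cons x L ih =>
    rw [List.forall_mem_cons] at h
    rw [List.prod_cons, ← mul_assoc, h.1, neg_mul, mul_assoc, ih h.2, mul_smul_comm,
      List.length_cons, pow_succ, mul_neg_one, neg_smul, mul_assoc]

namespace CPn

variable {n : ℕ}

/-- The paper's `ρ`, with `ρ(e_i) = v_i`. -/
def rho : (Fin n → ℂ) →ₗ[ℂ] MV n :=
  AddMonoidAlgebra.singleZeroAlgHom.toLinearMap ∘ₗ ExteriorAlgebra.ι ℂ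

lemma v_eq_rho (i : Fin (n+1)) : v n i = rho (EE n i) := rfl

lemma VI_eq_singleZeroAlgHom (I : Fin n → ℤ) :
    VI n I = AddMonoidAlgebra.singleZeroAlgHom (R := ℂ) (EI n I) := by
  rw [VI, EI, map_list_prod, List.map_map]
  rfl

lemma W_eq_range_rho : W n = LinearMap.range (rho (n := n)) := by
  have hgen : {x | ∃ i : Fin (n+1), i ≠ 0 ∧ x = v n i}
      = rho '' Set.range (Pi.basisFun ℂ (Fin n)) := by
    ext x
    constructor
    · rintro ⟨i, hi, rfl⟩
      obtain ⟨j, rfl⟩ := Fin.exists_succ_eq.2 hi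
      exact ⟨_, ⟨j, rfl⟩, by simp [v_eq_rho, EE]⟩
    · rintro ⟨_, ⟨j, rfl⟩, rfl⟩
      exact ⟨j.succ, j.succ_ne_zero, by simp [v_eq_rho, EE]⟩
  rw [W, hgen, Submodule.span_image, (Pi.basisFun ℂ (Fin n)).span_eq, Submodule.map_top]

lemma rho_mul_rho (u u' : Fin n → ℂ) : rho u * rho u' = -(rho u' * rho u) := by
  simp only [rho, LinearMap.comp_apply, AlgHom.toLinearMap_apply, ← map_mul, ← map_neg,
    eq_neg_of_add_eq_zero_left (ExteriorAlgebra.ι_add_mul_swap u u')]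

lemma rho_mul_chi (u : Fin n → ℂ) (I : Fin n → ℤ) : rho u * χ n I = χ n I * rho u := by
  simp only [rho, χ, LinearMap.comp_apply, AlgHom.toLinearMap_apply,
    AddMonoidAlgebra.singleZeroAlgHom_apply, AddMonoidAlgebra.single_mul_single, add_comm,
    mul_one, one_mul]

lemma rho_mul_chiVI (u : Fin n → ℂ) (I : Fin n → ℤ) :
    rho u * chiVI n I = (-1 : ℤ) ^ wt n I • (chiVI n I * rho u) := by
  have hVI : rho u * VI n I = (-1 : ℤ) ^ wt n I • (VI n I * rho u) := by
    rw [VI, mul_list_prod_of_forall_anticomm, List.length_map, Finset.length_sort, wt]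
    simp only [List.mem_map, forall_exists_index, and_imp, forall_apply_eq_imp_iff₂]
    exact fun i _ => by rw [v_eq_rho, rho_mul_rho]
  rw [chiVI, ← mul_assoc, rho_mul_chi, mul_assoc, hVI, mul_smul_comm, mul_assoc]

def weightSpace (I : Fin n → ℤ) : Submodule ℂ (MV n) :=
  LinearMap.range (AddMonoidAlgebra.lsingle I : ExteriorAlgebra ℂ (Fin n → ℂ) →ₗ[ℂ] MV n)

lemma weightSpace_mul_le (I J : Fin n → ℤ) :
    weightSpace I * weightSpace J ≤ weightSpace (I + J) := by
  rw [Submodule.mul_le]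
  rintro _ ⟨x, rfl⟩ _ ⟨y, rfl⟩
  exact ⟨x * y, (AddMonoidAlgebra.single_mul_single ..).symm⟩

lemma VIk_le_weightSpace (I : Fin n → ℤ) (k : ℕ) : VIk n I k ≤ weightSpace I := by
  have hchi : Submodule.span ℂ {chiVI n I} ≤ weightSpace I := by
    rw [Submodule.span_singleton_le_iff_mem, chiVI, VI_eq_singleZeroAlgHom]
    exact ⟨EI n I, by simp [χ, AddMonoidAlgebra.single_mul_single]⟩
  have hW : ∀ m, W n ^ m ≤ weightSpace 0 := fun m => by
    rw [W_eq_range_rho, rho, LinearMap.range_comp, ← Submodule.map_pow]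
    exact LinearMap.map_le_range
  simpa only [VIk, add_zero] using
    (mul_le_mul' hchi (hW (k - wt n I))).trans (weightSpace_mul_le I 0)

lemma dPi_eq_rho_mul_of_mem_weightSpace (a : Fin n → Fin n → ℂ) {I : Fin n → ℤ}
    {x : MV n} (hx : x ∈ weightSpace I) : dPi n a x = rho (contr n a I) * x := by
  obtain ⟨ω, rfl⟩ := hx
  simp [dPi, rho, AddMonoidAlgebra.single_mul_single]

lemma rho_mul_mem_VIk_succ (u : Fin n → ℂ) {I : Fin n → ℤ} {k : ℕ} (hk : wt n I ≤ k)
    {x : MV n} (hx : x ∈ VIk n I k) : rho u * x ∈ VIk n I (k + 1) := by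
  have hswap : Submodule.span ℂ {rho u} * Submodule.span ℂ {chiVI n I}
      ≤ Submodule.span ℂ {chiVI n I} * Submodule.span ℂ {rho u} := by
    rw [Submodule.span_mul_span, Submodule.span_mul_span, Set.singleton_mul_singleton,
      Set.singleton_mul_singleton, Submodule.span_singleton_le_iff_mem, rho_mul_chiVI]
    exact Submodule.smul_of_tower_mem _ _ (Submodule.mem_span_singleton_self _)
  have hρ : Submodule.span ℂ {rho u} ≤ W n := by
    rw [Submodule.span_singleton_le_iff_mem, W_eq_range_rho]
    exact LinearMap.mem_range_self _ _
  have hmem := Submodule.mul_mem_mul (Submodule.mem_span_singleton_self (rho u)) hx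
  rw [VIk, ← mul_assoc] at hmem
  rw [VIk, Nat.sub_add_comm hk, pow_succ', ← mul_assoc]
  exact mul_le_mul_left (hswap.trans (mul_le_mul_right hρ _)) _ hmem

theorem dPi_preserves_weight_spaces_general (n : ℕ) (a : Fin n → Fin n → ℂ) (k : ℕ)
    (I : Fin n → ℤ) (hI : I ∈ Sk n k) :
    Submodule.map (dPi n a) (VIk n I k) ≤ VIk n I (k+1) := by
  rintro _ ⟨x, hx, rfl⟩
  rw [dPi_eq_rho_mul_of_mem_weightSpace a (VIk_le_weightSpace I k hx)]
  exact rho_mul_mem_VIk_succ _ hI.2 hx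

/-- d_π(V_I^k) ⊆ V_I^{k+1} for every I ∈ S_k, 0 ≤ k ≤ n (V_I^k seen
inside H⁰(X,∧ᵏT), V_I^{k+1} inside H⁰(X,∧^{k+1}T)). -/
theorem dPi_preserves_weight_spaces (n : ℕ) (a : Fin n → Fin n → ℂ) (k : ℕ)
    (hk : k ≤ n) (I : Fin n → ℤ) (hI : I ∈ Sk n k) :
    Submodule.map (dPi n a) (VIk n I k) ≤ VIk n I (k+1) :=
  dPi_preserves_weight_spaces_general n a k I hI

end CPn
end
end

section
/- Let π be a holomorphic toric Poisson structure on X = ℂPⁿ with associated Π ∈ ∧²N_ℂ, and d_π = [π,·]. Then: (1) for any I ∈ S_k (0 ≤ k ≤ n) with (ι_I Π)∧ℰ_I = 0, one has d_π(V_I^k) = 0; (2) for any I ∈ S_{k−1} ⊆ S_k (1 ≤ k ≤ n) with (ι_I Π)∧ℰ_I ≠ 0, if Ψ ∈ V_I^k satisfies d_π(Ψ) = 0, then there exists Φ ∈ V_I^{k−1} with Ψ = d_π(Φ). -/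
/-!
Formalization of statements from "Poisson Cohomology of holomorphic toric Poisson
manifolds. I." (W. Hong).

Modeling conventions.  Mathlib has no holomorphic geometry of ℂPⁿ, so we use the
standard faithful algebraic model: a holomorphic multivector field on a toric variety
is determined by its restriction to the dense open torus, where (in the invariant
frame and with Laurent-monomial coefficients) multivector fields form the algebra
`MV n = AddMonoidAlgebra (ExteriorAlgebra ℂ ℂⁿ) ℤⁿ`: the element `single I ω`
represents `χ^I ⊗ ω` (`χ^I` the Laurent monomial of weight `I`, `ω` a constant
multivector in the frame `v_1, …, v_n`, `v_i = ρ(e_i)`).  Multiplication is the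
wedge product.  Similarly `AMV n` models multivector fields on ℂ^{n+1}∖{0} in the
frame `u_i = z_i ∂/∂z_i`.  Holomorphic multivector fields on ℂPⁿ are defined as the
image under `p_*` of the k-vector fields on ℂ^{n+1} with homogeneous polynomial
coefficients of degree k (this is exactly the classical description of
`H⁰(ℂPⁿ, ∧ᵏ𝒯)`, due to Bondal).  The Schouten differential `d_π = [π,·]` of a
torus-invariant bivector `π = ρ(Π)` acts weightwise by
`[π, χ^I ⊗ ω] = χ^I ⊗ (ι(ι_I Π) ∧ ω)`.
-/

noncomputable section
open Finset

/-!
On the weight-`I` part, `d_π` is left multiplication by `ι(ι_I Π)` on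
`χ^I ⊗ ℰ_I ∧ ⋀N_ℂ`, so part (1) is immediate. For part (2), `(ι_I Π) ∧ ℰ_I ≠ 0` means that
`ι_I Π` lies outside the span of the vectors `e_i` forming `ℰ_I`, so some functional `d` has
`d(ι_I Π) = 1` and kills those `e_i`. Contraction by `d` is a homotopy for `ι(ι_I Π) ∧ ·`,
commutes with `ℰ_I ∧ ·` up to sign and lowers the degree by one, so it turns a cocycle in
`V_I^k` into a primitive in `V_I^{k-1}`.
-/

namespace ExteriorAlgebra

open CliffordAlgebra

section CommRing

variable {R M : Type*} [CommRing R] [AddCommGroup M] [Module R M]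

theorem ι_mul_prod_map_ι_of_mem {b : M} {L : List M} (hb : b ∈ L) :
    ι R b * (L.map (ι R)).prod = 0 := by
  induction L with
  | nil => exact absurd hb List.not_mem_nil
  | cons c t ih =>
    rw [List.map_cons, List.prod_cons, ← mul_assoc]
    rcases List.mem_cons.mp hb with rfl | hbt
    · rw [ι_sq_zero, zero_mul]
    · rw [eq_neg_of_add_eq_zero_left (ι_add_mul_swap b c), neg_mul, mul_assoc, ih hbt,
        mul_zero, neg_zero]

theorem ι_mul_prod_map_ι_of_mem_span {x : M} {L : List M}
    (hx : x ∈ Submodule.span R {y | y ∈ L}) : ι R x * (L.map (ι R)).prod = 0 := by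
  induction hx using Submodule.span_induction with
  | mem y hy => exact ι_mul_prod_map_ι_of_mem hy
  | zero => rw [map_zero, zero_mul]
  | add y z _ _ hy hz => rw [map_add, add_mul, hy, hz, add_zero]
  | smul c y _ hy => rw [map_smul, smul_mul_assoc, hy, smul_zero]

theorem contractLeft_mem_exteriorPower (d : Module.Dual R M) :
    ∀ {m : ℕ} {y : ExteriorAlgebra R M}, y ∈ ⋀[R]^(m + 1) M → contractLeft d y ∈ ⋀[R]^m M
  | 0, y, hy => by
    rw [exteriorPower, zero_add, pow_one] at hy
    obtain ⟨w, rfl⟩ := hy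
    rw [contractLeft_ι, exteriorPower, pow_zero]
    exact Submodule.algebraMap_mem (d w)
  | m + 1, y, hy => by
    rw [exteriorPower, pow_succ'] at hy
    refine Submodule.mul_induction_on hy ?_ fun _ _ h₁ h₂ => by
      rw [map_add]; exact add_mem h₁ h₂
    rintro _ ⟨w, rfl⟩ z hz
    rw [contractLeft_ι_mul]
    refine sub_mem (Submodule.smul_mem _ _ hz) ?_
    rw [exteriorPower, pow_succ']
    exact Submodule.mul_mem_mul ⟨w, rfl⟩ (contractLeft_mem_exteriorPower d hz)

theorem contractLeft_prod_map_ι_mul (d : Module.Dual R M) {L : List M}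
    (hL : ∀ b ∈ L, d b = 0) (σ : ExteriorAlgebra R M) :
    contractLeft d ((L.map (ι R)).prod * σ)
      = (-1 : R) ^ L.length • ((L.map (ι R)).prod * contractLeft d σ) := by
  induction L with
  | nil => simp
  | cons c t ih =>
    rw [List.map_cons, List.prod_cons, List.length_cons, mul_assoc, contractLeft_ι_mul,
      ih fun b hb => hL b (List.mem_cons_of_mem c hb), hL c List.mem_cons_self, zero_smul,
      zero_sub, mul_smul_comm, ← neg_smul, pow_succ, mul_neg_one, mul_assoc]

theorem eq_ι_mul_contractLeft_of_ι_mul_eq_zero {d : Module.Dual R M} {x : M} (hdx : d x = 1)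
    {y : ExteriorAlgebra R M} (hy : ι R x * y = 0) : y = ι R x * contractLeft d y := by
  have h := contractLeft_ι_mul d x y
  rwa [hy, map_zero, hdx, one_smul, eq_comm, sub_eq_zero] at h

end CommRing

theorem exists_eq_ι_mul_prod_mul_of_ι_mul_prod_mul_eq_zero {K V : Type*} [Field K]
    [AddCommGroup V] [Module K V] {L : List V} {x : V} (hxL : ι K x * (L.map (ι K)).prod ≠ 0)
    {m : ℕ} {σ : ExteriorAlgebra K V} (hσ : σ ∈ ⋀[K]^(m + 1) V)
    (hz : ι K x * ((L.map (ι K)).prod * σ) = 0) :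
    ∃ τ ∈ ⋀[K]^m V, (L.map (ι K)).prod * σ = ι K x * ((L.map (ι K)).prod * τ) := by
  have hx : x ∉ Submodule.span K {y | y ∈ L} := fun h => hxL (ι_mul_prod_map_ι_of_mem_span h)
  obtain ⟨f, hfx, hf⟩ := Submodule.exists_dual_map_eq_bot_of_notMem hx inferInstance
  set d := (f x)⁻¹ • f
  have hdx : d x = 1 := inv_mul_cancel₀ hfx
  have hdL : ∀ b ∈ L, d b = 0 := fun b hb => by
    have hfb : f b ∈ (⊥ : Submodule K K) :=
      hf ▸ Submodule.mem_map_of_mem (Submodule.subset_span hb)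
    simp [d, (Submodule.mem_bot K).mp hfb]
  refine ⟨(-1 : K) ^ L.length • contractLeft d σ,
    Submodule.smul_mem _ _ (contractLeft_mem_exteriorPower d hσ), ?_⟩
  rw [mul_smul_comm, ← contractLeft_prod_map_ι_mul d hdL]
  exact eq_ι_mul_contractLeft_of_ι_mul_eq_zero hdx hz

end ExteriorAlgebra

namespace CPn

open ExteriorAlgebra AddMonoidAlgebra

variable {n : ℕ}

theorem dPi_single (a : Fin n → Fin n → ℂ) (I : Fin n → ℤ)
    (ω : ExteriorAlgebra ℂ (Fin n → ℂ)) :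
    dPi n a (single I ω) = single I (ι ℂ (contr n a I) * ω) := by
  simp [dPi]

theorem EI_eq_prod_map_ι (I : Fin n → ℤ) :
    EI n I = ((((deg1Set n I).sort (· ≤ ·)).map (EE n)).map (ι ℂ)).prod := by
  rw [EI, List.map_map]
  rfl

theorem chiVI_eq_single (I : Fin n → ℤ) : chiVI n I = single I (EI n I) := by
  have hVI : VI n I = (singleZeroAlgHom : _ →ₐ[ℂ] MV n) (EI n I) := by
    rw [VI, EI, map_list_prod, List.map_map]
    rfl
  rw [chiVI, χ, hVI, singleZeroAlgHom_apply, single_mul_single, add_zero, one_mul]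

theorem W_eq_map_range_ι :
    W n = (LinearMap.range (ι ℂ)).map (singleZeroAlgHom : _ →ₐ[ℂ] MV n).toLinearMap := by
  rw [LinearMap.range_eq_map, ← (Pi.basisFun ℂ (Fin n)).span_eq,
    Submodule.map_span, Submodule.map_span, ← Set.range_comp, ← Set.range_comp, W]
  congr 1
  ext x
  simp only [Set.mem_ofPred_eq, Set.mem_range, Function.comp_apply, Pi.basisFun_apply]
  constructor
  · rintro ⟨i, hi, rfl⟩
    obtain ⟨j, rfl⟩ := Fin.exists_succ_eq.mpr hi
    exact ⟨j, by simp [v, EE]⟩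
  · rintro ⟨j, rfl⟩
    exact ⟨j.succ, Fin.succ_ne_zero j, by simp [v, EE]⟩

theorem mem_VIk_iff {I : Fin n → ℤ} {k : ℕ} {Ψ : MV n} :
    Ψ ∈ VIk n I k ↔ ∃ σ ∈ ⋀[ℂ]^(k - wt n I) (Fin n → ℂ), Ψ = single I (EI n I * σ) := by
  rw [VIk, W_eq_map_range_ι, ← Submodule.map_pow, chiVI_eq_single,
    Submodule.mem_span_singleton_mul]
  constructor
  · rintro ⟨_, ⟨σ, hσ, rfl⟩, rfl⟩
    exact ⟨σ, hσ, by rw [AlgHom.toLinearMap_apply, singleZeroAlgHom_apply, single_mul_single,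
      add_zero]⟩
  · rintro ⟨σ, hσ, rfl⟩
    exact ⟨_, Submodule.mem_map_of_mem hσ, by rw [AlgHom.toLinearMap_apply,
      singleZeroAlgHom_apply, single_mul_single, add_zero]⟩

/-- (1) For I ∈ S_k (0 ≤ k ≤ n) with (ι_I Π)∧ℰ_I = 0 one has
d_π(V_I^k) = 0.  (2) For I ∈ S_{k−1} ⊆ S_k (1 ≤ k ≤ n) with (ι_I Π)∧ℰ_I ≠ 0, every
Ψ ∈ V_I^k with d_π(Ψ) = 0 is of the form Ψ = d_π(Φ) with Φ ∈ V_I^{k−1}. -/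
theorem dPi_on_weight_spaces (n : ℕ) (a : Fin n → Fin n → ℂ) :
    (∀ k ≤ n, ∀ I ∈ Sk n k,
      ExteriorAlgebra.ι ℂ (contr n a I) * EI n I = 0 →
        Submodule.map (dPi n a) (VIk n I k) = ⊥) ∧
    (∀ k, 1 ≤ k → k ≤ n → ∀ I ∈ Sk n (k-1),
      ExteriorAlgebra.ι ℂ (contr n a I) * EI n I ≠ 0 →
        ∀ Ψ ∈ VIk n I k, dPi n a Ψ = 0 →
          ∃ Φ ∈ VIk n I (k-1), Ψ = dPi n a Φ) := by
  refine ⟨fun k _ I _ hI => ?_, fun k hk _ I hIS hI Ψ hΨ hdΨ => ?_⟩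
  · rw [Submodule.eq_bot_iff]
    rintro _ ⟨Ψ, hΨ, rfl⟩
    obtain ⟨σ, -, rfl⟩ := mem_VIk_iff.mp hΨ
    rw [dPi_single, ← mul_assoc, hI, zero_mul, single_zero]
  · obtain ⟨σ, hσ, rfl⟩ := mem_VIk_iff.mp hΨ
    rw [dPi_single, single_eq_zero] at hdΨ
    rw [show k - wt n I = k - 1 - wt n I + 1 by have := hIS.2; omega] at hσ
    rw [EI_eq_prod_map_ι] at hI hdΨ
    obtain ⟨τ, hτ, hστ⟩ := exists_eq_ι_mul_prod_mul_of_ι_mul_prod_mul_eq_zero hI hσ hdΨ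
    refine ⟨single I (EI n I * τ), mem_VIk_iff.mpr ⟨τ, hτ, rfl⟩, ?_⟩
    rw [dPi_single, EI_eq_prod_map_ι, hστ]

end CPn
end
end
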